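/- arXiv:0904.0270 — 8 statements merged into one kernel-verified Lean document; each statement's English description precedes it below -/
import Mathlib

section
/- Let H be a separable complex Hilbert space, {S_γ}_{γ∈Γ} a family of closed subspaces of H, χ = ∪_{γ∈Γ} S_γ, and S_{γ,θ} = S_γ + S_θ. Let Ψ = {ψ_i}_{i∈I} be a Bessel sequence in H and A its sampling operator. Then A is one-to-one on χ if and only if A is one-to-one on every subspace S_{γ,θ} with γ,θ ∈ Γ. -/
open scoped ComplexInnerProductSpace

/-- Let `{S γ}_{γ ∈ Γ}` be a family of closed subspaces of a separable complex
Hilbert space `H`, `χ = ⋃ γ, S γ` and `S_{γ,θ} = S γ + S θ`.  Let `Ψ` be a Bessel sequence in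
`H` and `A` its sampling operator.  Then `A` is one-to-one on `χ` if and only if `A` is
one-to-one on every subspace `S_{γ,θ}`, `γ, θ ∈ Γ`. -/
theorem stmt_2
    {H : Type*} [NormedAddCommGroup H] [InnerProductSpace ℂ H] [CompleteSpace H]
    [SecondCountableTopology H]
    {I : Type*} [Countable I]
    {Γ : Type*} (S : Γ → Submodule ℂ H) (hS : ∀ γ, IsClosed ((S γ : Submodule ℂ H) : Set H))
    (ψ : I → H) (B : ℝ) (hB : 0 < B)
    (hBessel : ∀ h : H, ∑' i : I, ‖⟪ψ i, h⟫‖ ^ 2 ≤ B * ‖h‖ ^ 2)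
    (A : H →L[ℂ] lp (fun _ : I => ℂ) 2)
    (hA : ∀ f : H, ∀ i : I, A f i = ⟪ψ i, f⟫) :
    Set.InjOn A (⋃ γ : Γ, (S γ : Set H)) ↔
      ∀ γ θ : Γ, Set.InjOn A ((S γ ⊔ S θ : Submodule ℂ H) : Set H) := by
  constructor
  · intro h γ θ u hu v hv huv
    obtain ⟨a, ha, b, hb, rfl⟩ := Submodule.mem_sup.mp hu
    obtain ⟨c, hc, d, hd, rfl⟩ := Submodule.mem_sup.mp hv
    have key : A (a - c) = A (d - b) := by
      simp only [map_sub]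
      rw [sub_eq_sub_iff_add_eq_add]
      simpa [map_add, add_comm] using huv
    have := h (Set.mem_iUnion.mpr ⟨γ, Submodule.sub_mem _ ha hc⟩)
      (Set.mem_iUnion.mpr ⟨θ, Submodule.sub_mem _ hd hb⟩) key
    have h2 := sub_eq_sub_iff_add_eq_add.mp this
    rw [add_comm d c] at h2
    exact h2
  · intro h x hx y hy hxy
    obtain ⟨γ, hγ⟩ := Set.mem_iUnion.mp hx
    obtain ⟨θ, hθ⟩ := Set.mem_iUnion.mp hy
    exact h γ θ (Submodule.mem_sup_left hγ) (Submodule.mem_sup_right hθ) hxy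
end

section
/- Let H be a separable complex Hilbert space, {S_γ}_{γ∈Γ} a family of closed subspaces of H, χ = ∪_{γ∈Γ} S_γ, and S_{γ,θ} = S_γ + S_θ. Let Ψ = {ψ_i}_{i∈I} be a Bessel sequence in H and A its sampling operator. Then A is stable on χ with stability bounds α and β if and only if α‖x‖² ≤ ‖Ax‖² ≤ β‖x‖² for all x ∈ S_{γ,θ} and all γ,θ ∈ Γ. -/
open scoped ComplexInnerProductSpace

/-- Let `{S γ}_{γ ∈ Γ}` be a family of closed subspaces of a separable complex
Hilbert space `H`, `χ = ⋃ γ, S γ` and `S_{γ,θ} = S γ + S θ`.  Let `Ψ` be a Bessel sequence in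
`H` and `A` its sampling operator.  Then `A` is stable on `χ` with stability bounds `α` and `β`
if and only if `α‖x‖² ≤ ‖A x‖² ≤ β‖x‖²` for all `x ∈ S_{γ,θ}` and all `γ, θ ∈ Γ`. -/
theorem stmt_3
    {H : Type*} [NormedAddCommGroup H] [InnerProductSpace ℂ H] [CompleteSpace H]
    [SecondCountableTopology H]
    {I : Type*} [Countable I]
    {Γ : Type*} (S : Γ → Submodule ℂ H) (hS : ∀ γ, IsClosed ((S γ : Submodule ℂ H) : Set H))
    (ψ : I → H) (B : ℝ) (hB : 0 < B)
    (hBessel : ∀ h : H, ∑' i : I, ‖⟪ψ i, h⟫‖ ^ 2 ≤ B * ‖h‖ ^ 2)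
    (A : H →L[ℂ] lp (fun _ : I => ℂ) 2)
    (hA : ∀ f : H, ∀ i : I, A f i = ⟪ψ i, f⟫)
    (α β : ℝ) (hα : 0 < α) (hαβ : α ≤ β) :
    (∀ x₁ ∈ ⋃ γ : Γ, (S γ : Set H), ∀ x₂ ∈ ⋃ γ : Γ, (S γ : Set H),
        α * ‖x₁ - x₂‖ ^ 2 ≤ ‖A x₁ - A x₂‖ ^ 2 ∧ ‖A x₁ - A x₂‖ ^ 2 ≤ β * ‖x₁ - x₂‖ ^ 2) ↔
      (∀ γ θ : Γ, ∀ x ∈ (S γ ⊔ S θ : Submodule ℂ H),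
        α * ‖x‖ ^ 2 ≤ ‖A x‖ ^ 2 ∧ ‖A x‖ ^ 2 ≤ β * ‖x‖ ^ 2) := by
  constructor
  · intro h γ θ x hx
    obtain ⟨y, hy, z, hz, rfl⟩ := Submodule.mem_sup.mp hx
    have := h y (Set.mem_iUnion.mpr ⟨γ, hy⟩) (-z)
      (Set.mem_iUnion.mpr ⟨θ, neg_mem hz⟩)
    simpa [sub_neg_eq_add] using this
  · intro h x₁ hx₁ x₂ hx₂
    obtain ⟨γ, hγ⟩ := Set.mem_iUnion.mp hx₁
    obtain ⟨θ, hθ⟩ := Set.mem_iUnion.mp hx₂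
    have hmem : x₁ - x₂ ∈ (S γ ⊔ S θ : Submodule ℂ H) := by
      rw [sub_eq_add_neg]
      exact Submodule.add_mem_sup hγ (neg_mem hθ)
    have := h γ θ _ hmem
    simpa [map_sub] using this
end

section
/- Let H be a separable complex Hilbert space, {S_γ}_{γ∈Γ} a family of closed subspaces of H, χ = ∪_{γ∈Γ} S_γ, and S̄_{γ,θ} the closure of S_γ + S_θ. Let Ψ = {ψ_i}_{i∈I} be a Bessel sequence in H and A its sampling operator. If for every γ,θ ∈ Γ the family {P_{S̄_{γ,θ}} ψ_i}_{i∈I} is complete in S̄_{γ,θ} (its span is dense in S̄_{γ,θ}), then A is one-to-one on χ. -/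
/-!
If `f, g ∈ χ` have the same samples, say `f ∈ S γ` and `g ∈ S θ`, then `x = f - g` lies in
`M = S̄_{γ,θ}` and is orthogonal to every `ψ i`. Since `x ∈ M` and `P_M` is self-adjoint,
`⟪P_M ψ i, x⟫ = ⟪ψ i, x⟫ = 0`, so `x` is orthogonal to the closed span of the `P_M ψ i`, which
is all of `M` by the completeness assumption; hence `x ⊥ x` and `x = 0`.
-/

open scoped ComplexInnerProductSpace InnerProductSpace

namespace Submodule

variable {𝕜 E : Type*} [RCLike 𝕜] [NormedAddCommGroup E] [InnerProductSpace 𝕜 E]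

theorem eq_zero_of_mem_closure_span_of_inner_eq_zero {s : Set E} {x : E}
    (hx : x ∈ (span 𝕜 s).topologicalClosure) (hs : ∀ v ∈ s, ⟪v, x⟫_𝕜 = 0) : x = 0 := by
  have hle : (span 𝕜 s).topologicalClosure ≤ (𝕜 ∙ x)ᗮ :=
    topologicalClosure_minimal _
      (span_le.mpr fun v hv => mem_orthogonal_singleton_iff_inner_left.mpr (hs v hv))
      (isClosed_orthogonal _)
  exact inner_self_eq_zero.mp (mem_orthogonal_singleton_iff_inner_left.mp (hle hx))

theorem eq_zero_of_inner_eq_zero_of_closure_span_orthogonalProjectionOnto_eq {ι : Type*}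
    (K : Submodule 𝕜 E) [K.HasOrthogonalProjection] (ψ : ι → E)
    (hK : K =
      (span 𝕜 (Set.range fun i => (K.orthogonalProjectionOnto (ψ i) : E))).topologicalClosure)
    {x : E} (hxK : x ∈ K) (hx : ∀ i, ⟪ψ i, x⟫_𝕜 = 0) : x = 0 := by
  refine eq_zero_of_mem_closure_span_of_inner_eq_zero (hK ▸ hxK) ?_
  rintro _ ⟨i, rfl⟩
  exact (K.coe_inner _ ⟨x, hxK⟩).trans
    ((inner_orthogonalProjectionOnto_eq_of_mem_right ⟨x, hxK⟩ (ψ i)).trans (hx i))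

end Submodule

theorem stmt_4_general
    {H : Type*} [NormedAddCommGroup H] [InnerProductSpace ℂ H] [CompleteSpace H]
    {I : Type*}
    {Γ : Type*} (S : Γ → Submodule ℂ H)
    (ψ : I → H)
    (A : H →L[ℂ] lp (fun _ : I => ℂ) 2)
    (hA : ∀ f : H, ∀ i : I, A f i = ⟪ψ i, f⟫)
    (hcomplete : ∀ γ θ : Γ,
      (S γ ⊔ S θ : Submodule ℂ H).topologicalClosure =
        (Submodule.span ℂ (Set.range fun i : I =>
          (Submodule.orthogonalProjectionOnto (S γ ⊔ S θ : Submodule ℂ H).topologicalClosure (ψ i) : H)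
            )).topologicalClosure) :
    Set.InjOn A (⋃ γ : Γ, (S γ : Set H)) := by
  rintro f hf g hg hfg
  obtain ⟨γ, hf⟩ := Set.mem_iUnion.mp hf
  obtain ⟨θ, hg⟩ := Set.mem_iUnion.mp hg
  have hmem : f - g ∈ (S γ ⊔ S θ).topologicalClosure :=
    Submodule.le_topologicalClosure _
      (sub_mem (Submodule.mem_sup_left hf) (Submodule.mem_sup_right hg))
  have hsamples : ∀ i, ⟪ψ i, f - g⟫ = 0 := fun i => by
    rw [inner_sub_right, ← hA, ← hA, hfg, sub_self]
  exact sub_eq_zero.mp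
    (Submodule.eq_zero_of_inner_eq_zero_of_closure_span_orthogonalProjectionOnto_eq _ ψ
      (hcomplete γ θ) hmem hsamples)

/-- Let `{S γ}_{γ ∈ Γ}` be a family of closed subspaces of a separable complex
Hilbert space `H`, `χ = ⋃ γ, S γ`, and `S̄_{γ,θ}` the closure of `S γ + S θ`.  Let `Ψ` be a
Bessel sequence in `H` and `A` its sampling operator.  If for every `γ, θ ∈ Γ` the family
`{P_{S̄_{γ,θ}} ψ i}_{i ∈ I}` is complete in `S̄_{γ,θ}`, then `A` is one-to-one on `χ`. -/
theorem stmt_4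
    {H : Type*} [NormedAddCommGroup H] [InnerProductSpace ℂ H] [CompleteSpace H]
    [SecondCountableTopology H]
    {I : Type*} [Countable I]
    {Γ : Type*} (S : Γ → Submodule ℂ H) (hS : ∀ γ, IsClosed ((S γ : Submodule ℂ H) : Set H))
    (ψ : I → H) (B : ℝ) (hB : 0 < B)
    (hBessel : ∀ h : H, ∑' i : I, ‖⟪ψ i, h⟫‖ ^ 2 ≤ B * ‖h‖ ^ 2)
    (A : H →L[ℂ] lp (fun _ : I => ℂ) 2)
    (hA : ∀ f : H, ∀ i : I, A f i = ⟪ψ i, f⟫)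
    (hcomplete : ∀ γ θ : Γ,
      (S γ ⊔ S θ : Submodule ℂ H).topologicalClosure =
        (Submodule.span ℂ (Set.range fun i : I =>
          (Submodule.orthogonalProjectionOnto (S γ ⊔ S θ : Submodule ℂ H).topologicalClosure (ψ i) : H)
            )).topologicalClosure) :
    Set.InjOn A (⋃ γ : Γ, (S γ : Set H)) :=
  stmt_4_general S ψ A hA hcomplete
end

section
/- Let H be a separable complex Hilbert space, {S_γ}_{γ∈Γ} a family of closed subspaces of H, χ = ∪_{γ∈Γ} S_γ, and S̄_{γ,θ} the closure of S_γ + S_θ. Let Ψ = {ψ_i}_{i∈I} be a Bessel sequence in H and A its sampling operator. Then A is stable on χ with constants α and β if and only if for every γ,θ ∈ Γ the family {P_{S̄_{γ,θ}} ψ_i}_{i∈I} is a frame for S̄_{γ,θ} with the same constants α and β. -/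
open scoped ComplexInnerProductSpace

/-! Both sides are two-sided bounds for `‖A h‖²`. Since `A` is linear, stability on `⋃ S γ` is
the bound for all differences `x₁ - x₂`, which are exactly the vectors of the sums `S γ + S θ`;
by continuity of `A` the bound passes to their closures. On such a closure `K` the projection is
invisible to the samples, `⟪P_K ψ i, h⟫ = ⟪ψ i, h⟫` for `h ∈ K`, so the frame sum equals `‖A h‖²`. -/

theorem lp.norm_sq_eq_tsum {I : Type*} {E : I → Type*} [∀ i, NormedAddCommGroup (E i)]
    (f : lp E 2) : ‖f‖ ^ 2 = ∑' i, ‖f i‖ ^ 2 := by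
  simpa using lp.norm_rpow_eq_tsum (p := 2) (by norm_num) f

theorem Submodule.inner_starProjection_left_of_mem {𝕜 E : Type*} [RCLike 𝕜]
    [NormedAddCommGroup E] [InnerProductSpace 𝕜 E] (K : Submodule 𝕜 E)
    [K.HasOrthogonalProjection] (v : E) {h : E} (hh : h ∈ K) :
    inner 𝕜 (K.starProjection v) h = inner 𝕜 v h := by
  rw [inner_starProjection_left_eq_right, K.starProjection_eq_self_iff.mpr hh]

section TwoSidedBounds

variable {𝕜 E F : Type*} [RCLike 𝕜] [SeminormedAddCommGroup E] [NormedSpace 𝕜 E]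
  [SeminormedAddCommGroup F] [NormedSpace 𝕜 F]

def twoSidedBoundSet (A : E →L[𝕜] F) (α β : ℝ) : Set E :=
  {h | α * ‖h‖ ^ 2 ≤ ‖A h‖ ^ 2 ∧ ‖A h‖ ^ 2 ≤ β * ‖h‖ ^ 2}

theorem isClosed_twoSidedBoundSet (A : E →L[𝕜] F) (α β : ℝ) :
    IsClosed (twoSidedBoundSet A α β) := by
  simp only [twoSidedBoundSet, Set.ofPred_and]
  exact (isClosed_le (by fun_prop) (by fun_prop)).inter (isClosed_le (by fun_prop) (by fun_prop))

theorem Submodule.topologicalClosure_subset_twoSidedBoundSet {A : E →L[𝕜] F} {α β : ℝ}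
    {K : Submodule 𝕜 E} (hK : (K : Set E) ⊆ twoSidedBoundSet A α β) :
    (K.topologicalClosure : Set E) ⊆ twoSidedBoundSet A α β := by
  rw [Submodule.topologicalClosure_coe]
  exact closure_minimal hK (isClosed_twoSidedBoundSet A α β)

theorem stable_on_iUnion_iff {Γ : Type*} (S : Γ → Submodule 𝕜 E) (A : E →L[𝕜] F) (α β : ℝ) :
    (∀ x₁ ∈ ⋃ γ, (S γ : Set E), ∀ x₂ ∈ ⋃ γ, (S γ : Set E),
        α * ‖x₁ - x₂‖ ^ 2 ≤ ‖A x₁ - A x₂‖ ^ 2 ∧ ‖A x₁ - A x₂‖ ^ 2 ≤ β * ‖x₁ - x₂‖ ^ 2) ↔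
      ∀ γ θ, ∀ h ∈ (S γ ⊔ S θ).topologicalClosure, h ∈ twoSidedBoundSet A α β := by
  simp only [← map_sub]
  constructor
  · intro hstable γ θ
    refine Submodule.topologicalClosure_subset_twoSidedBoundSet fun h hh => ?_
    obtain ⟨a, ha, b, hb, rfl⟩ := Submodule.mem_sup.mp hh
    simpa [twoSidedBoundSet] using hstable a (Set.mem_iUnion_of_mem γ ha) (-b)
      (Set.mem_iUnion_of_mem θ ((S θ).neg_mem hb))
  · intro hbound x₁ hx₁ x₂ hx₂
    obtain ⟨γ, hγ⟩ := Set.mem_iUnion.mp hx₁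
    obtain ⟨θ, hθ⟩ := Set.mem_iUnion.mp hx₂
    exact hbound γ θ _ <| Submodule.le_topologicalClosure _ <|
      sub_mem (Submodule.mem_sup_left hγ) (Submodule.mem_sup_right hθ)

end TwoSidedBounds

theorem stmt_6_general
    {H : Type*} [NormedAddCommGroup H] [InnerProductSpace ℂ H] [CompleteSpace H]
    {I : Type*}
    {Γ : Type*} (S : Γ → Submodule ℂ H)
    (ψ : I → H)
    (A : H →L[ℂ] lp (fun _ : I => ℂ) 2)
    (hA : ∀ f : H, ∀ i : I, A f i = ⟪ψ i, f⟫)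
    (α β : ℝ) :
    (∀ x₁ ∈ ⋃ γ : Γ, (S γ : Set H), ∀ x₂ ∈ ⋃ γ : Γ, (S γ : Set H),
        α * ‖x₁ - x₂‖ ^ 2 ≤ ‖A x₁ - A x₂‖ ^ 2 ∧ ‖A x₁ - A x₂‖ ^ 2 ≤ β * ‖x₁ - x₂‖ ^ 2) ↔
      (∀ γ θ : Γ, ∀ h ∈ (S γ ⊔ S θ : Submodule ℂ H).topologicalClosure,
        α * ‖h‖ ^ 2 ≤ ∑' i : I,
            ‖⟪((S γ ⊔ S θ : Submodule ℂ H).topologicalClosure.orthogonalProjection (ψ i) : H),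
              h⟫‖ ^ 2 ∧
          ∑' i : I,
            ‖⟪((S γ ⊔ S θ : Submodule ℂ H).topologicalClosure.orthogonalProjection (ψ i) : H),
              h⟫‖ ^ 2 ≤ β * ‖h‖ ^ 2) := by
  rw [stable_on_iUnion_iff]
  refine forall₂_congr fun γ θ => forall₂_congr fun h hh => ?_
  have hsamples : ‖A h‖ ^ 2 =
      ∑' i, ‖⟪(S γ ⊔ S θ).topologicalClosure.starProjection (ψ i), h⟫‖ ^ 2 := by
    simp_rw [lp.norm_sq_eq_tsum, hA, Submodule.inner_starProjection_left_of_mem _ _ hh]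
  rw [twoSidedBoundSet, Set.mem_ofPred_eq, hsamples]
  -- the coercion of `orthogonalProjection` is `starProjection` up to unfolding
  rfl

/-- Let `{S γ}_{γ ∈ Γ}` be a family of closed subspaces of a separable complex
Hilbert space `H`, `χ = ⋃ γ, S γ`, and `S̄_{γ,θ}` the closure of `S γ + S θ`.  Let `Ψ` be a
Bessel sequence in `H` and `A` its sampling operator.  Then `A` is stable on `χ` with constants
`α` and `β` if and only if for every `γ, θ ∈ Γ` the family `{P_{S̄_{γ,θ}} ψ i}_{i ∈ I}` is a
frame for `S̄_{γ,θ}` with the same constants `α` and `β`. -/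
theorem stmt_6
    {H : Type*} [NormedAddCommGroup H] [InnerProductSpace ℂ H] [CompleteSpace H]
    [SecondCountableTopology H]
    {I : Type*} [Countable I]
    {Γ : Type*} (S : Γ → Submodule ℂ H) (hS : ∀ γ, IsClosed ((S γ : Submodule ℂ H) : Set H))
    (ψ : I → H) (B : ℝ) (hB : 0 < B)
    (hBessel : ∀ h : H, ∑' i : I, ‖⟪ψ i, h⟫‖ ^ 2 ≤ B * ‖h‖ ^ 2)
    (A : H →L[ℂ] lp (fun _ : I => ℂ) 2)
    (hA : ∀ f : H, ∀ i : I, A f i = ⟪ψ i, f⟫)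
    (α β : ℝ) (hα : 0 < α) (hαβ : α ≤ β) :
    (∀ x₁ ∈ ⋃ γ : Γ, (S γ : Set H), ∀ x₂ ∈ ⋃ γ : Γ, (S γ : Set H),
        α * ‖x₁ - x₂‖ ^ 2 ≤ ‖A x₁ - A x₂‖ ^ 2 ∧ ‖A x₁ - A x₂‖ ^ 2 ≤ β * ‖x₁ - x₂‖ ^ 2) ↔
      (∀ γ θ : Γ, ∀ h ∈ (S γ ⊔ S θ : Submodule ℂ H).topologicalClosure,
        α * ‖h‖ ^ 2 ≤ ∑' i : I,
            ‖⟪((S γ ⊔ S θ : Submodule ℂ H).topologicalClosure.orthogonalProjection (ψ i) : H),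
              h⟫‖ ^ 2 ∧
          ∑' i : I,
            ‖⟪((S γ ⊔ S θ : Submodule ℂ H).topologicalClosure.orthogonalProjection (ψ i) : H),
              h⟫‖ ^ 2 ≤ β * ‖h‖ ^ 2) :=
  stmt_6_general S ψ A hA α β
end

section
/- Let H be a separable complex Hilbert space, {S_γ}_{γ∈Γ} a family of finite-dimensional subspaces of H, χ = ∪_{γ∈Γ} S_γ, and S_{γ,θ} = S_γ + S_θ. Let Ψ = {ψ_i}_{i∈I} be a Bessel sequence in H with sampling operator A, and for every γ,θ ∈ Γ let Φ_{γ,θ} be a frame for S_{γ,θ}. Then A is one-to-one on χ if and only if dim(range(G_{Φ_{γ,θ},Ψ})) = dim(S_{γ,θ}) for all γ,θ ∈ Γ. -/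
open scoped ComplexInnerProductSpace

/-- Let `{S γ}_{γ ∈ Γ}` be a family of finite-dimensional subspaces of a
separable complex Hilbert space `H`, `χ = ⋃ γ, S γ`, and `S_{γ,θ} = S γ + S θ`.  Let `Ψ` be a
Bessel sequence in `H` with sampling operator `A`, and for every `γ, θ ∈ Γ` let `Φ_{γ,θ}` be a
frame (a finite spanning family) for `S_{γ,θ}`.  Then `A` is one-to-one on `χ` if and only if
`dim (range G_{Φ_{γ,θ},Ψ}) = dim S_{γ,θ}` for all `γ, θ ∈ Γ`, where `range G_{Φ_{γ,θ},Ψ}` is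
spanned by `{A (φ_{γ,θ} j)}_j`. -/
theorem stmt_8
    {H : Type*} [NormedAddCommGroup H] [InnerProductSpace ℂ H] [CompleteSpace H]
    [SecondCountableTopology H]
    {I : Type*} [Countable I]
    {Γ : Type*} (S : Γ → Submodule ℂ H) (hfin : ∀ γ, FiniteDimensional ℂ (S γ))
    (ψ : I → H) (B : ℝ) (hB : 0 < B)
    (hBessel : ∀ h : H, ∑' i : I, ‖⟪ψ i, h⟫‖ ^ 2 ≤ B * ‖h‖ ^ 2)
    (A : H →L[ℂ] lp (fun _ : I => ℂ) 2)
    (hA : ∀ f : H, ∀ i : I, A f i = ⟪ψ i, f⟫)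
    (d : Γ → Γ → ℕ) (φ : ∀ γ θ : Γ, Fin (d γ θ) → H)
    (hφ : ∀ γ θ : Γ, Submodule.span ℂ (Set.range (φ γ θ)) = S γ ⊔ S θ) :
    Set.InjOn A (⋃ γ : Γ, (S γ : Set H)) ↔
      ∀ γ θ : Γ,
        Module.finrank ℂ (Submodule.span ℂ (Set.range fun j : Fin (d γ θ) => A (φ γ θ j))) =
          Module.finrank ℂ (S γ ⊔ S θ : Submodule ℂ H) := by
  classical
  -- Key reformulation: injectivity on unions ↔ trivial kernel on each `S γ ⊔ S θ`
  have key : Set.InjOn A (⋃ γ : Γ, (S γ : Set H)) ↔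
      ∀ γ θ : Γ, ∀ x ∈ (S γ ⊔ S θ : Submodule ℂ H), A x = 0 → x = 0 := by
    constructor
    · intro hinj γ θ x hx hAx
      obtain ⟨f, hf, g, hg, rfl⟩ := Submodule.mem_sup.mp hx
      have hAfg : A f = A (-g) := by
        have : A f + A g = 0 := by rw [← map_add]; exact hAx
        simp [map_neg, eq_neg_of_add_eq_zero_left this]
      have hf' : f ∈ ⋃ γ : Γ, (S γ : Set H) := Set.mem_iUnion.mpr ⟨γ, hf⟩
      have hg' : -g ∈ ⋃ γ : Γ, (S γ : Set H) :=
        Set.mem_iUnion.mpr ⟨θ, neg_mem hg⟩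
      have := hinj hf' hg' hAfg
      rw [this]; abel
    · intro h f hf g hg hfg
      obtain ⟨γ, hfγ⟩ := Set.mem_iUnion.mp hf
      obtain ⟨θ, hgθ⟩ := Set.mem_iUnion.mp hg
      have hx : f - g ∈ (S γ ⊔ S θ : Submodule ℂ H) :=
        Submodule.sub_mem_sup hfγ hgθ
      have : f - g = 0 := h γ θ _ hx (by rw [map_sub, hfg, sub_self])
      exact sub_eq_zero.mp this
  rw [key]
  apply forall_congr'; intro γ; apply forall_congr'; intro θ
  set W : Submodule ℂ H := S γ ⊔ S θ with hW
  haveI : FiniteDimensional ℂ W := Submodule.finiteDimensional_sup _ _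
  set L := (A : H →ₗ[ℂ] lp (fun _ : I => ℂ) 2).domRestrict W with hL
  have hspan : Submodule.span ℂ (Set.range fun j : Fin (d γ θ) => A (φ γ θ j)) =
      Submodule.map (A : H →ₗ[ℂ] lp (fun _ : I => ℂ) 2) W := by
    have : (Set.range fun j : Fin (d γ θ) => A (φ γ θ j)) =
        (A : H →ₗ[ℂ] lp (fun _ : I => ℂ) 2) '' Set.range (φ γ θ) := by
      rw [← Set.range_comp]; rfl
    rw [this, ← Submodule.map_span, hφ γ θ]
  have hrange : LinearMap.range L = Submodule.map
      (A : H →ₗ[ℂ] lp (fun _ : I => ℂ) 2) W := by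
    ext x
    constructor
    · rintro ⟨⟨y, hy⟩, rfl⟩; exact ⟨y, hy, rfl⟩
    · rintro ⟨y, hy, rfl⟩; exact ⟨⟨y, hy⟩, rfl⟩
  rw [hspan, ← hrange]
  have hrn := LinearMap.finrank_range_add_finrank_ker L
  constructor
  · intro hinj
    have hker : LinearMap.ker L = ⊥ := by
      rw [LinearMap.ker_eq_bot']
      rintro ⟨x, hx⟩ hLx
      have : A x = 0 := hLx
      exact Subtype.ext (hinj x hx this)
    rw [hker] at hrn
    simpa using hrn
  · intro hrk x hx hAx
    have hker : Module.finrank ℂ (LinearMap.ker L) = 0 := by omega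
    have hkb : LinearMap.ker L = ⊥ := Submodule.finrank_eq_zero.mp hker
    have hmem : (⟨x, hx⟩ : W) ∈ LinearMap.ker L := by
      show A x = 0
      exact hAx
    rw [hkb, Submodule.mem_bot] at hmem
    exact congrArg Subtype.val hmem
end

section
/- Let H be a separable complex Hilbert space, {S_γ}_{γ∈Γ} a family of finite-dimensional subspaces of H, χ = ∪_{γ∈Γ} S_γ, and S_{γ,θ} = S_γ + S_θ. Let Ψ = {ψ_i}_{i∈I} be a Bessel sequence in H with I a finite index set, and A its sampling operator. If A is one-to-one on χ, then the cardinality of I satisfies #I ≥ dim(S_{γ,θ}) for every γ,θ ∈ Γ, i.e. #I ≥ sup_{γ,θ∈Γ} dim(S_{γ,θ}). -/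
open scoped ComplexInnerProductSpace

/-- Let `{S γ}_{γ ∈ Γ}` be a family of finite-dimensional subspaces of a
separable complex Hilbert space `H`, `χ = ⋃ γ, S γ`, and `S_{γ,θ} = S γ + S θ`.  Let `Ψ` be a
Bessel sequence in `H` indexed by a finite set `I`, with sampling operator `A`.  If `A` is
one-to-one on `χ`, then `#I ≥ dim S_{γ,θ}` for every `γ, θ ∈ Γ`. -/
theorem stmt_9
    {H : Type*} [NormedAddCommGroup H] [InnerProductSpace ℂ H] [CompleteSpace H]
    [SecondCountableTopology H]
    {I : Type*} [Fintype I]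
    {Γ : Type*} (S : Γ → Submodule ℂ H) (hfin : ∀ γ, FiniteDimensional ℂ (S γ))
    (ψ : I → H) (B : ℝ) (hB : 0 < B)
    (hBessel : ∀ h : H, ∑' i : I, ‖⟪ψ i, h⟫‖ ^ 2 ≤ B * ‖h‖ ^ 2)
    (A : H →L[ℂ] lp (fun _ : I => ℂ) 2)
    (hA : ∀ f : H, ∀ i : I, A f i = ⟪ψ i, f⟫)
    (hinj : Set.InjOn A (⋃ γ : Γ, (S γ : Set H))) :
    ∀ γ θ : Γ, Module.finrank ℂ (S γ ⊔ S θ : Submodule ℂ H) ≤ Fintype.card I := by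
  intro γ θ
  classical
  -- linear map H → (I → ℂ) given by coordinates of A
  let L : H →ₗ[ℂ] (I → ℂ) :=
  { toFun := fun f i => A f i
    map_add' := by intro a b; funext i; simp [lp.coeFn_add]
    map_smul' := by intro c a; funext i; simp [lp.coeFn_smul] }
  have hker : ∀ x : (S γ ⊔ S θ : Submodule ℂ H),
      L.comp (S γ ⊔ S θ : Submodule ℂ H).subtype x = 0 → x = 0 := by
    rintro ⟨x, hx⟩ hx0
    obtain ⟨f, hf, g, hg, hfg⟩ := Submodule.mem_sup.mp hx
    have hAx : A x = 0 := by
      ext i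
      have := congrFun hx0 i
      simpa [L] using this
    have hAf : A f = A (-g) := by
      have : A f + A g = 0 := by
        rw [← map_add, hfg, hAx]
      rw [map_neg, eq_neg_iff_add_eq_zero]
      exact this
    have hmemf : f ∈ ⋃ γ' : Γ, (S γ' : Set H) := Set.mem_iUnion.mpr ⟨γ, hf⟩
    have hmemg : -g ∈ ⋃ γ' : Γ, (S γ' : Set H) :=
      Set.mem_iUnion.mpr ⟨θ, (S θ).neg_mem hg⟩
    have : f = -g := hinj hmemf hmemg hAf
    have : x = 0 := by rw [← hfg, this]; abel
    exact Subtype.ext this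
  have hinj' : Function.Injective (L.comp (S γ ⊔ S θ : Submodule ℂ H).subtype) := by
    rw [injective_iff_map_eq_zero]
    exact hker
  have := LinearMap.finrank_le_finrank_of_injective hinj'
  simpa [Module.finrank_fintype_fun_eq_card] using this
end

section
/- Let H be a separable complex Hilbert space, Ψ = {ψ_i}_{i∈I} a Bessel sequence in H with sampling operator A, S a finite-dimensional subspace of H, and Φ = {φ_j}_{j=1}^d a Parseval frame for S. Then A is stable on S with constants α and β if and only if (i) dim(range(G_{Φ,Ψ})) = dim(S) and (ii) σ(G_{Φ,Ψ}* G_{Φ,Ψ}) ⊆ {0} ∪ [α,β], where G_{Φ,Ψ}* G_{Φ,Ψ} is the composition of G_{Φ,Ψ} with its adjoint, an operator on ℂ^d, and σ denotes its spectrum. -/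
/-!
Write `T : ℂ^d → H` for the synthesis operator of `φ`. The Parseval identity makes the analysis
operator `T*` isometric on `S` with `T T* = id` there, so `T` maps `(ker T)ᗮ` isometrically onto
`S`. Since `G = A T`, stability of `A` on `S` is therefore the two-sided bound
`α ‖c‖² ≤ ‖G c‖² ≤ β ‖c‖²` on `(ker T)ᗮ`, and the rank condition says exactly that
`ker G = ker T`. Finally, expanding `‖G c‖² = ⟪G* G c, c⟫` in an eigenbasis of `G* G`, the bound
holds on `(ker G)ᗮ` if and only if every nonzero eigenvalue of `G* G` lies in `[α, β]`.
-/

open scoped ComplexInnerProductSpace InnerProductSpace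
open LinearMap (ker range)
open Module (finrank)
open RCLike (re)

def HasNormSqBoundsOn {E F : Type*} [Norm E] [Norm F] (A : E → F) (s : Set E) (α β : ℝ) :
    Prop :=
  ∀ x ∈ s, α * ‖x‖ ^ 2 ≤ ‖A x‖ ^ 2 ∧ ‖A x‖ ^ 2 ≤ β * ‖x‖ ^ 2

theorem hasNormSqBoundsOn_iff_forall_sub {R E F 𝓕 : Type*} [Ring R] [SeminormedAddCommGroup E]
    [SeminormedAddCommGroup F] [Module R E] [FunLike 𝓕 E F] [AddMonoidHomClass 𝓕 E F]
    (A : 𝓕) (S : Submodule R E) (α β : ℝ) :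
    HasNormSqBoundsOn A S α β ↔ ∀ x₁ ∈ S, ∀ x₂ ∈ S,
      α * ‖x₁ - x₂‖ ^ 2 ≤ ‖A x₁ - A x₂‖ ^ 2 ∧ ‖A x₁ - A x₂‖ ^ 2 ≤ β * ‖x₁ - x₂‖ ^ 2 := by
  refine ⟨fun h x₁ hx₁ x₂ hx₂ => ?_, fun h x hx => by simpa using h x hx 0 S.zero_mem⟩
  rw [← map_sub]
  exact h _ (S.sub_mem hx₁ hx₂)

theorem ker_comp_eq_of_hasNormSqBoundsOn_range {R V E F : Type*} [Ring R] [AddCommGroup V]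
    [NormedAddCommGroup E] [SeminormedAddCommGroup F] [Module R V] [Module R E] [Module R F]
    {α β : ℝ} (hα : 0 < α) (T : V →ₗ[R] E) (A : E →ₗ[R] F)
    (h : HasNormSqBoundsOn A (range T) α β) : ker (A ∘ₗ T) = ker T := by
  refine le_antisymm (fun k hk => ?_) (LinearMap.ker_le_ker_comp T A)
  have hlow := (h (T k) ⟨k, rfl⟩).1
  rw [show A (T k) = 0 from hk, norm_zero] at hlow
  have : ‖T k‖ ^ 2 ≤ 0 := by nlinarith
  simpa using this

theorem LinearMap.ker_comp_eq_iff_finrank_range_comp_eq {K V W X : Type*} [DivisionRing K]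
    [AddCommGroup V] [Module K V] [FiniteDimensional K V] [AddCommGroup W] [Module K W]
    [AddCommGroup X] [Module K X] (T : V →ₗ[K] W) (A : W →ₗ[K] X) :
    ker (A ∘ₗ T) = ker T ↔ finrank K (range (A ∘ₗ T)) = finrank K (range T) := by
  have hT := T.finrank_range_add_finrank_ker
  have hAT := (A ∘ₗ T).finrank_range_add_finrank_ker
  refine ⟨fun h => by rw [h] at hAT; omega, fun h => ?_⟩
  exact (Submodule.eq_of_le_of_finrank_eq (LinearMap.ker_le_ker_comp T A) (by omega)).symm

theorem hasNormSqBoundsOn_range_iff {𝕜 E V F : Type*} [RCLike 𝕜] [NormedAddCommGroup E]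
    [InnerProductSpace 𝕜 E] [FiniteDimensional 𝕜 E] [SeminormedAddCommGroup V] [Module 𝕜 V]
    [Norm F] {T : E →ₗ[𝕜] V} (hT : ∀ c ∈ (ker T)ᗮ, ‖T c‖ = ‖c‖) (A : V → F) (α β : ℝ) :
    HasNormSqBoundsOn A (range T) α β ↔ HasNormSqBoundsOn (A ∘ T) (ker T)ᗮ α β := by
  refine ⟨fun h c hc => ?_, ?_⟩
  · simpa [hT c hc] using h (T c) ⟨c, rfl⟩
  · rintro h _ ⟨e, rfl⟩
    set c := e - (ker T).starProjection e
    have hc : c ∈ (ker T)ᗮ := (ker T).sub_starProjection_mem_orthogonal e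
    have hTc : T c = T e := by
      rw [map_sub, LinearMap.mem_ker.mp ((ker T).starProjection_apply_mem e), sub_zero]
    have := h c hc
    rwa [← hT c hc, Function.comp_apply, hTc] at this

section Spectrum

variable {𝕜 E F : Type*} [RCLike 𝕜] [NormedAddCommGroup E] [InnerProductSpace 𝕜 E]
  [FiniteDimensional 𝕜 E]

theorem LinearMap.IsSymmetric.re_inner_apply_self_eq_sum {T : E →ₗ[𝕜] E} (hT : T.IsSymmetric)
    {n : ℕ} (hn : finrank 𝕜 E = n) (x : E) :
    re ⟪T x, x⟫_𝕜 = ∑ i, hT.eigenvalues hn i * ‖⟪hT.eigenvectorBasis hn i, x⟫_𝕜‖ ^ 2 := by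
  have hterm : ∀ i, ⟪T x, hT.eigenvectorBasis hn i⟫_𝕜 * ⟪hT.eigenvectorBasis hn i, x⟫_𝕜 =
      hT.eigenvalues hn i * ‖⟪hT.eigenvectorBasis hn i, x⟫_𝕜‖ ^ 2 := fun i => by
    rw [hT, hT.apply_eigenvectorBasis, inner_smul_right, ← inner_conj_symm _ x, mul_assoc,
      RCLike.mul_conj, RCLike.norm_conj]
  rw [← (hT.eigenvectorBasis hn).sum_inner_mul_inner, Finset.sum_congr rfl fun i _ => hterm i]
  simp

variable [CompleteSpace E] [NormedAddCommGroup F] [InnerProductSpace 𝕜 F] [CompleteSpace F]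
  {α β : ℝ}

namespace ContinuousLinearMap

-- An eigenvector `b` for the eigenvalue `0` of `G* G` lies in `ker G`, so `⟪b, c⟫ = 0` for
-- `c ∈ (ker G)ᗮ`: only the eigenvalues in `[α, β]` contribute to `‖G c‖² = ∑ μ |⟪b, c⟫|²`.
theorem hasNormSqBoundsOn_orthogonal_ker_of_spectrum_subset (G : E →L[𝕜] F)
    (h : spectrum 𝕜 (G.adjoint ∘L G) ⊆ (fun t : ℝ => (t : 𝕜)) '' ({0} ∪ Set.Icc α β)) :
    HasNormSqBoundsOn G G.kerᗮ α β := by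
  intro c hc
  have hM := G.isPositive_adjoint_comp_self.isSymmetric
  set b := hM.eigenvectorBasis rfl
  set μ := hM.eigenvalues rfl
  have hμ : ∀ i, ⟪b i, c⟫_𝕜 = 0 ∨ μ i ∈ Set.Icc α β := by
    intro i
    have hspec : (μ i : 𝕜) ∈ spectrum 𝕜 (G.adjoint ∘L G) := by
      rw [spectrum_eq, ← Module.End.hasEigenvalue_iff_mem_spectrum]
      exact hM.hasEigenvalue_eigenvalues rfl i
    obtain ⟨t, ht | ht, hteq⟩ := h hspec
    · have hbi : b i ∈ G.ker := by
        rw [← G.ker_adjoint_comp_self, LinearMap.mem_ker]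
        have : G.adjoint (G (b i)) = (μ i : 𝕜) • b i := hM.apply_eigenvectorBasis rfl i
        rwa [← RCLike.ofReal_injective hteq, ht, RCLike.ofReal_zero, zero_smul] at this
      exact .inl (Submodule.inner_right_of_mem_orthogonal hbi hc)
    · exact .inr (RCLike.ofReal_injective hteq ▸ ht)
  have hGc : ‖G c‖ ^ 2 = ∑ i, μ i * ‖⟪b i, c⟫_𝕜‖ ^ 2 :=
    (G.apply_norm_sq_eq_inner_adjoint_left c).trans (hM.re_inner_apply_self_eq_sum rfl c)
  rw [hGc, ← b.sum_sq_norm_inner_right c, Finset.mul_sum, Finset.mul_sum]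
  constructor <;> refine Finset.sum_le_sum fun i _ => ?_ <;> rcases hμ i with h0 | hi
  · simp [h0]
  · exact mul_le_mul_of_nonneg_right hi.1 (sq_nonneg _)
  · simp [h0]
  · exact mul_le_mul_of_nonneg_right hi.2 (sq_nonneg _)

-- An eigenvector for a nonzero eigenvalue `μ` lies in the range of `G* G`, hence in `(ker G)ᗮ`,
-- and there `μ ‖v‖² = ‖G v‖²`.
theorem spectrum_subset_of_hasNormSqBoundsOn_orthogonal_ker (G : E →L[𝕜] F)
    (h : HasNormSqBoundsOn G G.kerᗮ α β) :
    spectrum 𝕜 (G.adjoint ∘L G) ⊆ (fun t : ℝ => (t : 𝕜)) '' ({0} ∪ Set.Icc α β) := by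
  intro μ hμ
  rw [spectrum_eq, ← Module.End.hasEigenvalue_iff_mem_spectrum] at hμ
  obtain ⟨v, hv, hv0⟩ := hμ.exists_hasEigenvector
  have hMv : G.adjoint (G v) = μ • v := Module.End.mem_eigenspace_iff.mp hv
  rcases eq_or_ne μ 0 with rfl | hμ0
  · exact ⟨0, .inl rfl, by simp⟩
  have hv_orth : v ∈ G.kerᗮ := (Submodule.mem_orthogonal _ _).mpr fun k hk => by
    have : μ * ⟪k, v⟫_𝕜 = 0 := by
      rw [← inner_smul_right, ← hMv, adjoint_inner_right, show G k = 0 from hk, inner_zero_left]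
    exact (mul_eq_zero.mp this).resolve_left hμ0
  have hv2 : (0 : ℝ) < ‖v‖ ^ 2 := by positivity
  have hμv : μ * ((‖v‖ : 𝕜) ^ 2) = (‖G v‖ : 𝕜) ^ 2 := by
    rw [← inner_self_eq_norm_sq_to_K, ← inner_self_eq_norm_sq_to_K, ← inner_smul_right, ← hMv,
      adjoint_inner_right]
  obtain ⟨hlow, hup⟩ := h v hv_orth
  refine ⟨‖G v‖ ^ 2 / ‖v‖ ^ 2, .inr ⟨(le_div_iff₀ hv2).mpr hlow, (div_le_iff₀ hv2).mpr hup⟩, ?_⟩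
  simp only [RCLike.ofReal_div, RCLike.ofReal_pow, ← hμv]
  exact mul_div_cancel_right₀ _ (by exact_mod_cast hv2.ne')

theorem spectrum_adjoint_comp_self_subset_iff (G : E →L[𝕜] F) :
    spectrum 𝕜 (G.adjoint ∘L G) ⊆ (fun t : ℝ => (t : 𝕜)) '' ({0} ∪ Set.Icc α β) ↔
      HasNormSqBoundsOn G G.kerᗮ α β :=
  ⟨G.hasNormSqBoundsOn_orthogonal_ker_of_spectrum_subset,
    G.spectrum_subset_of_hasNormSqBoundsOn_orthogonal_ker⟩

end ContinuousLinearMap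

end Spectrum

section ParsevalFrame

variable {𝕜 ι V : Type*} [RCLike 𝕜] [NormedAddCommGroup V] [InnerProductSpace 𝕜 V]

variable (𝕜) in
def analysis (φ : ι → V) : V →ₗ[𝕜] EuclideanSpace 𝕜 ι :=
  (WithLp.linearEquiv 2 𝕜 (ι → 𝕜)).symm.toLinearMap ∘ₗ LinearMap.pi fun i => innerₛₗ 𝕜 (φ i)

theorem analysis_apply (φ : ι → V) (h : V) (i : ι) : analysis 𝕜 φ h i = ⟪φ i, h⟫_𝕜 := by
  simp [analysis]

variable [Fintype ι]

variable (𝕜) in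
def synthesis (φ : ι → V) : EuclideanSpace 𝕜 ι →ₗ[𝕜] V :=
  Fintype.linearCombination 𝕜 φ ∘ₗ (WithLp.linearEquiv 2 𝕜 (ι → 𝕜)).toLinearMap

theorem synthesis_apply (φ : ι → V) (c : EuclideanSpace 𝕜 ι) :
    synthesis 𝕜 φ c = ∑ i, c i • φ i := by
  simp [synthesis, Fintype.linearCombination_apply]

theorem inner_synthesis_left (φ : ι → V) (c : EuclideanSpace 𝕜 ι) (h : V) :
    ⟪synthesis 𝕜 φ c, h⟫_𝕜 = ⟪c, analysis 𝕜 φ h⟫_𝕜 := by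
  simp [synthesis_apply, analysis_apply, sum_inner, inner_smul_left, PiLp.inner_apply, mul_comm]

theorem norm_analysis_sq (φ : ι → V) (h : V) :
    ‖analysis 𝕜 φ h‖ ^ 2 = ∑ i, ‖⟪φ i, h⟫_𝕜‖ ^ 2 := by
  simp [EuclideanSpace.norm_sq_eq, analysis_apply]

structure IsParsevalFrame (φ : ι → V) (S : Submodule 𝕜 V) : Prop where
  mem : ∀ i, φ i ∈ S
  sum_norm_inner_sq : ∀ h ∈ S, ∑ i, ‖⟪φ i, h⟫_𝕜‖ ^ 2 = ‖h‖ ^ 2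

namespace IsParsevalFrame

variable {φ : ι → V} {S : Submodule 𝕜 V}

theorem norm_analysis (hφ : IsParsevalFrame φ S) {h : V} (hh : h ∈ S) :
    ‖analysis 𝕜 φ h‖ = ‖h‖ := by
  rw [← sq_eq_sq₀ (norm_nonneg _) (norm_nonneg _), norm_analysis_sq, hφ.sum_norm_inner_sq h hh]

theorem inner_analysis_analysis (hφ : IsParsevalFrame φ S) {x y : V} (hx : x ∈ S) (hy : y ∈ S) :
    ⟪analysis 𝕜 φ x, analysis 𝕜 φ y⟫_𝕜 = ⟪x, y⟫_𝕜 :=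
  (LinearMap.norm_map_iff_inner_map_map (analysis 𝕜 φ ∘ₗ S.subtype)).mp
    (fun z => hφ.norm_analysis z.2) ⟨x, hx⟩ ⟨y, hy⟩

theorem synthesis_mem (hφ : IsParsevalFrame φ S) (c : EuclideanSpace 𝕜 ι) :
    synthesis 𝕜 φ c ∈ S := by
  rw [synthesis_apply]
  exact S.sum_mem fun i _ => S.smul_mem _ (hφ.mem i)

theorem synthesis_analysis (hφ : IsParsevalFrame φ S) {h : V} (hh : h ∈ S) :
    synthesis 𝕜 φ (analysis 𝕜 φ h) = h := by
  have hw : synthesis 𝕜 φ (analysis 𝕜 φ h) - h ∈ S := S.sub_mem (hφ.synthesis_mem _) hh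
  have horth : ∀ y ∈ S, ⟪synthesis 𝕜 φ (analysis 𝕜 φ h) - h, y⟫_𝕜 = 0 := fun y hy => by
    rw [inner_sub_left, inner_synthesis_left, hφ.inner_analysis_analysis hh hy, sub_self]
  exact sub_eq_zero.mp (inner_self_eq_zero.mp (horth _ hw))

theorem range_synthesis (hφ : IsParsevalFrame φ S) : range (synthesis 𝕜 φ) = S :=
  le_antisymm (LinearMap.range_le_iff_comap.mpr (by ext; simp [hφ.synthesis_mem]))
    fun h hh => ⟨analysis 𝕜 φ h, hφ.synthesis_analysis hh⟩

-- `analysis (synthesis c) - c` lies both in `ker (synthesis)` and in its orthogonal complement.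
theorem norm_synthesis (hφ : IsParsevalFrame φ S) {c : EuclideanSpace 𝕜 ι}
    (hc : c ∈ (ker (synthesis 𝕜 φ))ᗮ) : ‖synthesis 𝕜 φ c‖ = ‖c‖ := by
  set c' := analysis 𝕜 φ (synthesis 𝕜 φ c)
  have hker : c' - c ∈ ker (synthesis 𝕜 φ) := by
    rw [LinearMap.mem_ker, map_sub, hφ.synthesis_analysis (hφ.synthesis_mem c), sub_self]
  have hc' : c' ∈ (ker (synthesis 𝕜 φ))ᗮ := fun k hk => by
    rw [← inner_synthesis_left, LinearMap.mem_ker.mp hk, inner_zero_left]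
  have hc'c : c' = c := sub_eq_zero.mp <|
    Submodule.disjoint_def.mp (ker _).orthogonal_disjoint _ hker (Submodule.sub_mem _ hc' hc)
  calc ‖synthesis 𝕜 φ c‖ = ‖c'‖ := (hφ.norm_analysis (hφ.synthesis_mem c)).symm
    _ = ‖c‖ := by rw [hc'c]

end IsParsevalFrame

end ParsevalFrame

theorem stmt_10_general
    {H : Type*} [NormedAddCommGroup H] [InnerProductSpace ℂ H]
    {I : Type*}
    (A : H →L[ℂ] lp (fun _ : I => ℂ) 2)
    (S : Submodule ℂ H)
    (d : ℕ) (φ : Fin d → H) (hmem : ∀ j, φ j ∈ S)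
    (hParseval : ∀ h ∈ S, ∑ j : Fin d, ‖⟪φ j, h⟫‖ ^ 2 = ‖h‖ ^ 2)
    (G : EuclideanSpace ℂ (Fin d) →L[ℂ] lp (fun _ : I => ℂ) 2)
    (hG : ∀ c : EuclideanSpace ℂ (Fin d), G c = A (∑ j : Fin d, c j • φ j))
    (α β : ℝ) (hα : 0 < α) :
    (∀ x₁ ∈ S, ∀ x₂ ∈ S,
        α * ‖x₁ - x₂‖ ^ 2 ≤ ‖A x₁ - A x₂‖ ^ 2 ∧ ‖A x₁ - A x₂‖ ^ 2 ≤ β * ‖x₁ - x₂‖ ^ 2) ↔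
      (Module.finrank ℂ (LinearMap.range G.toLinearMap) = Module.finrank ℂ S ∧
        spectrum ℂ ((ContinuousLinearMap.adjoint G).comp G) ⊆
          (fun t : ℝ => (t : ℂ)) '' ({0} ∪ Set.Icc α β)) := by
  have hφ : IsParsevalFrame φ S := ⟨hmem, hParseval⟩
  set T := synthesis ℂ φ
  have hG' : ⇑G = A ∘ T := funext fun c => by rw [hG, Function.comp_apply, synthesis_apply]
  have hGT : G.toLinearMap = A.toLinearMap ∘ₗ T := LinearMap.ext (congrFun hG')
  -- Stated with `Complex.ofReal`, which `rw` does not identify with `RCLike.ofReal` at `ℂ`.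
  have hspec : spectrum ℂ (G.adjoint ∘L G) ⊆ (fun t : ℝ => (t : ℂ)) '' ({0} ∪ Set.Icc α β) ↔
      HasNormSqBoundsOn G G.kerᗮ α β :=
    G.spectrum_adjoint_comp_self_subset_iff
  rw [← hasNormSqBoundsOn_iff_forall_sub, hspec,
    ← hφ.range_synthesis, hGT, ← LinearMap.ker_comp_eq_iff_finrank_range_comp_eq, hG']
  have hbounds := hasNormSqBoundsOn_range_iff (fun _ => hφ.norm_synthesis) A α β
  refine ⟨fun h => ?_, fun ⟨hker, h⟩ => ?_⟩
  · have hker := ker_comp_eq_of_hasNormSqBoundsOn_range hα T A.toLinearMap h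
    exact ⟨hker, hker ▸ hbounds.mp h⟩
  · exact hbounds.mpr (hker ▸ h)

/-- Let `Ψ` be a Bessel sequence in a separable complex Hilbert space `H`
with sampling operator `A`, `S` a finite-dimensional subspace of `H`, and `Φ = {φ j}_{j=1}^d`
a Parseval frame for `S`.  Let `G = G_{Φ,Ψ} = A ∘ B*_Φ : ℂ^d → ℓ²(I)` be the
cross-correlation operator.  Then `A` is stable on `S` with constants `α` and `β` if and only
if (i) `dim (range G) = dim S` and (ii) `σ(G* G) ⊆ {0} ∪ [α, β]`. -/
theorem stmt_10
    {H : Type*} [NormedAddCommGroup H] [InnerProductSpace ℂ H] [CompleteSpace H]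
    [SecondCountableTopology H]
    {I : Type*} [Countable I]
    (ψ : I → H) (B : ℝ) (hB : 0 < B)
    (hBessel : ∀ h : H, ∑' i : I, ‖⟪ψ i, h⟫‖ ^ 2 ≤ B * ‖h‖ ^ 2)
    (A : H →L[ℂ] lp (fun _ : I => ℂ) 2)
    (hA : ∀ f : H, ∀ i : I, A f i = ⟪ψ i, f⟫)
    (S : Submodule ℂ H) (hfin : FiniteDimensional ℂ S)
    (d : ℕ) (φ : Fin d → H) (hmem : ∀ j, φ j ∈ S)
    (hParseval : ∀ h ∈ S, ∑ j : Fin d, ‖⟪φ j, h⟫‖ ^ 2 = ‖h‖ ^ 2)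
    (G : EuclideanSpace ℂ (Fin d) →L[ℂ] lp (fun _ : I => ℂ) 2)
    (hG : ∀ c : EuclideanSpace ℂ (Fin d), G c = A (∑ j : Fin d, c j • φ j))
    (α β : ℝ) (hα : 0 < α) (hαβ : α ≤ β) :
    (∀ x₁ ∈ S, ∀ x₂ ∈ S,
        α * ‖x₁ - x₂‖ ^ 2 ≤ ‖A x₁ - A x₂‖ ^ 2 ∧ ‖A x₁ - A x₂‖ ^ 2 ≤ β * ‖x₁ - x₂‖ ^ 2) ↔
      (Module.finrank ℂ (LinearMap.range G.toLinearMap) = Module.finrank ℂ S ∧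
        spectrum ℂ ((ContinuousLinearMap.adjoint G).comp G) ⊆
          (fun t : ℝ => (t : ℂ)) '' ({0} ∪ Set.Icc α β)) :=
  stmt_10_general A S d φ hmem hParseval G hG α β hα
end

section
/- Let U and V be closed subspaces of a separable complex Hilbert space H. Then U + V is a closed subspace of H if and only if the cosine of the Friedrichs angle between U and V satisfies c[U,V] < 1, where c[U,V] := sup{|⟨u,v⟩| : u ∈ U⊖V, v ∈ V⊖U, ‖u‖ ≤ 1, ‖v‖ ≤ 1} and U⊖V := U ∩ (U∩V)^⊥. -/
open scoped ComplexInnerProductSpace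

/-!
Write `M = U ∩ V`. Then `U + V = M ⊕ (U ⊖ V + V ⊖ U)` with the second summand orthogonal to `M`,
so `U + V` is closed iff `U ⊖ V + V ⊖ U` is. For closed subspaces `A`, `B` of a Banach space with
`A ∩ B = 0`, the open mapping theorem makes `A + B` closed iff the addition map `A × B → H` is
bounded below, i.e. iff `ε ‖a‖ ≤ ‖a + b‖` for some `ε > 0`. In a Hilbert space this is equivalent
to `c₀(A, B) < 1`, where `c₀(A, B) = sup |⟪a, b⟫|` over the unit balls is the cosine of the
Dixmier angle (`dixmierCos A B`): one way since
`‖a + b‖² ≥ (1 - c₀) (‖a‖² + ‖b‖²)`, the other by choosing `b` to be minus the projection of `a`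
onto a line of `B`. Finally `c[U, V] = c₀(U ⊖ V, V ⊖ U)`.
-/

namespace Submodule

section Banach

variable {𝕜 E : Type*} [NontriviallyNormedField 𝕜] [NormedAddCommGroup E] [NormedSpace 𝕜 E]
  [CompleteSpace E]

theorem isClosed_sup_iff_exists_mul_norm_le_norm_add {A B : Submodule 𝕜 E}
    (hA : IsClosed (A : Set E)) (hB : IsClosed (B : Set E)) (hAB : Disjoint A B) :
    IsClosed ((A ⊔ B : Submodule 𝕜 E) : Set E) ↔
      ∃ ε > 0, ∀ a ∈ A, ∀ b ∈ B, ε * ‖a‖ ≤ ‖a + b‖ := by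
  have : CompleteSpace A := hA.completeSpace_coe
  have : CompleteSpace B := hB.completeSpace_coe
  let f : A × B →L[𝕜] E := A.subtypeL.coprod B.subtypeL
  have hrange : Set.range f = (A ⊔ B : Submodule 𝕜 E) := by
    ext z
    simp [f, Submodule.mem_sup, eq_comm]
  have hinj : Function.Injective f := by
    rw [injective_iff_map_eq_zero]
    rintro ⟨⟨a, ha⟩, ⟨b, hb⟩⟩ hab
    have hab : a + b = 0 := hab
    obtain rfl : a = 0 := disjoint_def.mp hAB a ha <| by
      rw [eq_neg_of_add_eq_zero_left hab]; exact B.neg_mem hb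
    simp_all
  rw [← hrange, f.isClosed_range_iff_antilipschitz_of_injective hinj,
    antilipschitzWith_iff_exists_mul_le_norm]
  constructor
  · rintro ⟨c, hc, h⟩
    refine ⟨c, hc, fun a ha b hb => ?_⟩
    calc c * ‖a‖ ≤ c * ‖((⟨a, ha⟩ : A), (⟨b, hb⟩ : B))‖ := by gcongr; exact le_max_left _ _
      _ ≤ ‖a + b‖ := h _
  · rintro ⟨ε, hε, h⟩
    refine ⟨ε / (1 + ε), by positivity, fun ⟨⟨a, ha⟩, ⟨b, hb⟩⟩ => ?_⟩
    have hεa : ε * ‖a‖ ≤ ‖a + b‖ := h a ha b hb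
    have hb : ‖b‖ ≤ ‖a + b‖ + ‖a‖ := by
      simpa using norm_sub_le (a + b) a
    change ε / (1 + ε) * max ‖a‖ ‖b‖ ≤ ‖a + b‖
    rw [div_mul_eq_mul_div, div_le_iff₀ (by positivity)]
    rcases le_total ‖a‖ ‖b‖ with hab | hab
    · rw [max_eq_right hab]; nlinarith
    · rw [max_eq_left hab]; nlinarith [mul_nonneg hε.le (norm_nonneg a)]

end Banach

section InnerProduct

variable {𝕜 E : Type*} [RCLike 𝕜] [NormedAddCommGroup E] [InnerProductSpace 𝕜 E]

local notation "⟪" x ", " y "⟫" => inner 𝕜 x y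

noncomputable def dixmierCos (A B : Submodule 𝕜 E) : ℝ :=
  sSup {r : ℝ | ∃ a ∈ A, ∃ b ∈ B, ‖a‖ ≤ 1 ∧ ‖b‖ ≤ 1 ∧ r = ‖⟪a, b⟫‖}

variable {A B : Submodule 𝕜 E}

theorem dixmierCos_nonneg : 0 ≤ dixmierCos A B :=
  Real.sSup_nonneg fun _ ⟨_, _, _, _, _, _, hr⟩ => hr ▸ norm_nonneg _

theorem dixmierCos_le_of_norm_inner_le {c : ℝ} (hc : 0 ≤ c)
    (h : ∀ a ∈ A, ∀ b ∈ B, ‖⟪a, b⟫‖ ≤ c * (‖a‖ * ‖b‖)) : dixmierCos A B ≤ c := by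
  refine Real.sSup_le (fun r ⟨a, ha, b, hb, ha1, hb1, hr⟩ => hr ▸ ?_) hc
  calc ‖⟪a, b⟫‖ ≤ c * (‖a‖ * ‖b‖) := h a ha b hb
    _ ≤ c * (1 * 1) := by gcongr
    _ = c := by ring

theorem norm_inner_le_dixmierCos_mul {a b : E} (ha : a ∈ A) (hb : b ∈ B) :
    ‖⟪a, b⟫‖ ≤ dixmierCos A B * (‖a‖ * ‖b‖) := by
  rcases eq_or_ne a 0 with rfl | ha0
  · simp
  rcases eq_or_ne b 0 with rfl | hb0
  · simp
  have hbdd : BddAbove {r : ℝ | ∃ a ∈ A, ∃ b ∈ B, ‖a‖ ≤ 1 ∧ ‖b‖ ≤ 1 ∧ r = ‖⟪a, b⟫‖} :=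
    ⟨1, fun r ⟨a, _, b, _, ha1, hb1, hr⟩ => hr ▸ (norm_inner_le_norm a b).trans
      (mul_le_one₀ ha1 (norm_nonneg b) hb1)⟩
  have hunit : ‖⟪(‖a‖⁻¹ : 𝕜) • a, (‖b‖⁻¹ : 𝕜) • b⟫‖ ≤ dixmierCos A B :=
    le_csSup hbdd ⟨_, A.smul_mem _ ha, _, B.smul_mem _ hb, (norm_smul_inv_norm ha0).le,
      (norm_smul_inv_norm hb0).le, rfl⟩
  rw [inner_smul_left, inner_smul_right, norm_mul, norm_mul, RCLike.norm_conj, norm_inv, norm_inv,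
    RCLike.norm_ofReal, RCLike.norm_ofReal, abs_norm, abs_norm] at hunit
  have hpos : 0 < ‖a‖ * ‖b‖ := by positivity
  rw [mul_comm, ← inv_mul_le_iff₀ hpos]
  calc (‖a‖ * ‖b‖)⁻¹ * ‖⟪a, b⟫‖ = ‖a‖⁻¹ * (‖b‖⁻¹ * ‖⟪a, b⟫‖) := by ring
    _ ≤ dixmierCos A B := hunit

theorem one_sub_dixmierCos_mul_le_norm_add_sq {a b : E} (ha : a ∈ A) (hb : b ∈ B) :
    (1 - dixmierCos A B) * (‖a‖ ^ 2 + ‖b‖ ^ 2) ≤ ‖a + b‖ ^ 2 := by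
  have hinner := norm_inner_le_dixmierCos_mul ha hb
  have hre : -‖⟪a, b⟫‖ ≤ RCLike.re ⟪a, b⟫ := (abs_le.mp (RCLike.abs_re_le_norm _)).1
  rw [@norm_add_sq 𝕜]
  nlinarith [sq_nonneg (‖a‖ - ‖b‖), dixmierCos_nonneg (A := A) (B := B)]

theorem norm_inner_sq_le_of_mul_norm_le_norm_add {ε : ℝ} (hε : 0 ≤ ε)
    (h : ∀ a ∈ A, ∀ b ∈ B, ε * ‖a‖ ≤ ‖a + b‖) {a b : E} (ha : a ∈ A) (hb : b ∈ B) :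
    ‖⟪a, b⟫‖ ^ 2 ≤ (1 - ε ^ 2) * (‖a‖ * ‖b‖) ^ 2 := by
  set P := (𝕜 ∙ b).starProjection
  have hPa : ‖P a‖ * ‖b‖ = ‖⟪a, b⟫‖ := by
    rcases eq_or_ne b 0 with rfl | hb0
    · simp
    have : 0 < ‖b‖ := norm_pos_iff.mpr hb0
    rw [starProjection_singleton, norm_smul, norm_div, RCLike.norm_ofReal, norm_inner_symm]
    field_simp
    rw [abs_of_nonneg (by positivity)]
  have hpyth : ‖a‖ ^ 2 = ‖P a‖ ^ 2 + ‖a - P a‖ ^ 2 := by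
    simpa using norm_sq_eq_add_norm_sq_starProjection a (𝕜 ∙ b)
  have hPB : P a ∈ B := span_singleton_le_iff_mem b B |>.mpr hb (starProjection_apply_mem _ _)
  -- test the hypothesis against `-P a ∈ B`, the closest point to `-a` on the line through `b`
  have hlow : ε * ‖a‖ ≤ ‖a - P a‖ := by
    simpa [sub_eq_add_neg] using h a ha _ (B.neg_mem hPB)
  have hlow2 : ε ^ 2 * ‖a‖ ^ 2 ≤ ‖a - P a‖ ^ 2 := by
    rw [← mul_pow]; gcongr
  rw [← hPa]
  nlinarith [sq_nonneg ‖b‖]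

theorem dixmierCos_lt_one_iff :
    dixmierCos A B < 1 ↔ ∃ ε > 0, ∀ a ∈ A, ∀ b ∈ B, ε * ‖a‖ ≤ ‖a + b‖ := by
  constructor
  · intro hc
    refine ⟨√(1 - dixmierCos A B), Real.sqrt_pos.mpr (by linarith), fun a ha b hb => ?_⟩
    rw [← pow_le_pow_iff_left₀ (by positivity) (norm_nonneg _) two_ne_zero, mul_pow,
      Real.sq_sqrt (by linarith)]
    calc (1 - dixmierCos A B) * ‖a‖ ^ 2 ≤ (1 - dixmierCos A B) * (‖a‖ ^ 2 + ‖b‖ ^ 2) := by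
          gcongr
          exact le_add_of_nonneg_right (sq_nonneg _)
      _ ≤ ‖a + b‖ ^ 2 := one_sub_dixmierCos_mul_le_norm_add_sq ha hb
  · rintro ⟨ε, hε, h⟩
    have hbound : dixmierCos A B ≤ √(1 - ε ^ 2) := by
      refine dixmierCos_le_of_norm_inner_le (Real.sqrt_nonneg _) fun a ha b hb => ?_
      rw [← Real.sqrt_sq (norm_nonneg ⟪a, b⟫), ← Real.sqrt_sq (by positivity : 0 ≤ ‖a‖ * ‖b‖),
        ← Real.sqrt_mul' _ (sq_nonneg _)]
      exact Real.sqrt_le_sqrt (norm_inner_sq_le_of_mul_norm_le_norm_add hε.le h ha hb)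
    calc dixmierCos A B ≤ √(1 - ε ^ 2) := hbound
      _ < 1 := by rw [Real.sqrt_lt' one_pos]; nlinarith

theorem disjoint_inf_orthogonal_inf (U V : Submodule 𝕜 E) :
    Disjoint (U ⊓ (U ⊓ V)ᗮ) (V ⊓ (U ⊓ V)ᗮ) :=
  disjoint_def.mpr fun x hxU hxV =>
    disjoint_def.mp (U ⊓ V).orthogonal_disjoint x ⟨hxU.1, hxV.1⟩ hxU.2

theorem sup_eq_inf_sup_inf_orthogonal (U V : Submodule 𝕜 E) [(U ⊓ V).HasOrthogonalProjection] :
    U ⊔ V = U ⊓ V ⊔ (U ⊓ (U ⊓ V)ᗮ ⊔ V ⊓ (U ⊓ V)ᗮ) := by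
  have hU := sup_orthogonal_inf_of_hasOrthogonalProjection (inf_le_left : U ⊓ V ≤ U)
  have hV := sup_orthogonal_inf_of_hasOrthogonalProjection (inf_le_right : U ⊓ V ≤ V)
  calc U ⊔ V = (U ⊓ V ⊔ (U ⊓ V)ᗮ ⊓ U) ⊔ (U ⊓ V ⊔ (U ⊓ V)ᗮ ⊓ V) := by rw [hU, hV]
    _ = U ⊓ V ⊔ (U ⊓ (U ⊓ V)ᗮ ⊔ V ⊓ (U ⊓ V)ᗮ) := by
      rw [sup_sup_sup_comm, sup_idem, inf_comm (U ⊓ V)ᗮ U, inf_comm (U ⊓ V)ᗮ V]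

theorem isClosed_sup_iff_of_le_orthogonal [CompleteSpace E] {M W : Submodule 𝕜 E}
    (hM : IsClosed (M : Set E)) (hWM : W ≤ Mᗮ) :
    IsClosed ((M ⊔ W : Submodule 𝕜 E) : Set E) ↔ IsClosed (W : Set E) := by
  constructor
  · intro h
    have hW : W = (M ⊔ W) ⊓ Mᗮ := by
      rw [sup_comm, sup_inf_assoc_of_le M hWM, M.inf_orthogonal_eq_bot, sup_bot_eq]
    rw [hW, coe_inf]
    exact h.inter M.isClosed_orthogonal
  · intro hW
    refine (isClosed_sup_iff_exists_mul_norm_le_norm_add hM hW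
      (M.orthogonal_disjoint.mono_right hWM)).mpr ⟨1, one_pos, fun m hm w hw => ?_⟩
    have hpyth := norm_add_sq_eq_norm_sq_add_norm_sq_of_inner_eq_zero m w (hWM hw m hm)
    rw [one_mul, ← pow_le_pow_iff_left₀ (norm_nonneg _) (norm_nonneg _) two_ne_zero]
    nlinarith [mul_self_nonneg ‖w‖]

end InnerProduct

end Submodule

open Submodule in
theorem stmt_19_general
    {H : Type*} [NormedAddCommGroup H] [InnerProductSpace ℂ H] [CompleteSpace H]
    (U V : Submodule ℂ H) (hU : IsClosed (U : Set H)) (hV : IsClosed (V : Set H)) :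
    IsClosed ((U ⊔ V : Submodule ℂ H) : Set H) ↔
      sSup {r : ℝ | ∃ u ∈ U ⊓ (U ⊓ V)ᗮ, ∃ v ∈ V ⊓ (U ⊓ V)ᗮ,
        ‖u‖ ≤ 1 ∧ ‖v‖ ≤ 1 ∧ r = ‖⟪u, v⟫‖} < 1 := by
  have hM : IsClosed ((U ⊓ V : Submodule ℂ H) : Set H) := hU.inter hV
  have : CompleteSpace (U ⊓ V : Submodule ℂ H) := hM.completeSpace_coe
  rw [sup_eq_inf_sup_inf_orthogonal, isClosed_sup_iff_of_le_orthogonal hM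
      (sup_le inf_le_right inf_le_right),
    isClosed_sup_iff_exists_mul_norm_le_norm_add (hU.inter (U ⊓ V).isClosed_orthogonal)
      (hV.inter (U ⊓ V).isClosed_orthogonal) (disjoint_inf_orthogonal_inf U V)]
  exact dixmierCos_lt_one_iff.symm

/-- Let `U` and `V` be closed subspaces of a separable complex Hilbert space
`H`.  Then `U + V` is a closed subspace of `H` if and only if the cosine of the Friedrichs
angle between `U` and `V` satisfies `c[U,V] < 1`, where
`c[U,V] = sup {|⟨u,v⟩| : u ∈ U⊖V, v ∈ V⊖U, ‖u‖ ≤ 1, ‖v‖ ≤ 1}` and `U⊖V = U ∩ (U ∩ V)ᗮ`. -/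
theorem stmt_19
    {H : Type*} [NormedAddCommGroup H] [InnerProductSpace ℂ H] [CompleteSpace H]
    [SecondCountableTopology H]
    (U V : Submodule ℂ H) (hU : IsClosed (U : Set H)) (hV : IsClosed (V : Set H)) :
    IsClosed ((U ⊔ V : Submodule ℂ H) : Set H) ↔
      sSup {r : ℝ | ∃ u ∈ U ⊓ (U ⊓ V)ᗮ, ∃ v ∈ V ⊓ (U ⊓ V)ᗮ,
        ‖u‖ ≤ 1 ∧ ‖v‖ ≤ 1 ∧ r = ‖⟪u, v⟫‖} < 1 :=
  stmt_19_general U V hU hV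
end
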